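/- arXiv:2011.10458 — 2 statements merged into one kernel-verified Lean document; each statement's English description precedes it below -/
import Mathlib

section
/- Let ζ : Fin n → ℂ with ‖ζ(i)‖ = 1 for all i be a vertex switching function, let D(ζ) be the diagonal matrix with entries ζ(i), and let G^ζ be the complex unit hypergraph with incidence function ω^ζ(i, k) = ζ(i)⁻¹ · ω(i, k). Then B(G^ζ) = D(ζ)ᴴ B(G), A(G^ζ) = D(ζ)ᴴ A(G) D(ζ), K(G^ζ) = D(ζ)ᴴ K(G) D(ζ), and (when all degrees are positive) L(G^ζ) = D(ζ)ᴴ L(G) D(ζ). -/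
open Matrix

/-- Degree of vertex `i`: the number of edges `k` with `ω i k ≠ 0`. -/
noncomputable def deg {n m : ℕ} (ω : Fin n → Fin m → ℂ) (i : Fin n) : ℕ :=
  Nat.card {k : Fin m // ω i k ≠ 0}

/-- Incidence matrix of a complex unit hypergraph. -/
noncomputable def incM {n m : ℕ} (ω : Fin n → Fin m → ℂ) : Matrix (Fin n) (Fin m) ℂ :=
  Matrix.of ω

/-- Adjacency matrix. -/
noncomputable def adjM {n m : ℕ} (ω : Fin n → Fin m → ℂ) : Matrix (Fin n) (Fin n) ℂ :=
  Matrix.of fun i j => if i = j then 0 else -∑ k, ω i k * (starRingEnd ℂ) (ω j k)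

/-- Degree matrix. -/
noncomputable def degM {n m : ℕ} (ω : Fin n → Fin m → ℂ) : Matrix (Fin n) (Fin n) ℂ :=
  Matrix.diagonal fun i => (deg ω i : ℂ)

/-- Kirchhoff Laplacian `K = D - A`. -/
noncomputable def kirLap {n m : ℕ} (ω : Fin n → Fin m → ℂ) : Matrix (Fin n) (Fin n) ℂ :=
  degM ω - adjM ω

/-- Normalized Laplacian `L = D⁻¹ K`. -/
noncomputable def normLap {n m : ℕ} (ω : Fin n → Fin m → ℂ) : Matrix (Fin n) (Fin n) ℂ :=
  (degM ω)⁻¹ * kirLap ω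

section Switching

variable {n m : ℕ}

lemma deg_mul_left (ω : Fin n → Fin m → ℂ) {c : Fin n → ℂ} (hc : ∀ i, c i ≠ 0) :
    deg (fun i k => c i * ω i k) = deg ω := by
  funext i
  refine Nat.card_congr (Equiv.subtypeEquivRight fun k => ?_)
  simp [hc i]

lemma degM_mul_left (ω : Fin n → Fin m → ℂ) {c : Fin n → ℂ} (hc : ∀ i, c i ≠ 0) :
    degM (fun i k => c i * ω i k) = degM ω := by
  rw [degM, degM, deg_mul_left ω hc]

lemma conjTranspose_diagonal_mul_diagonal_mul_diagonal {ι R : Type*} [Fintype ι]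
    [DecidableEq ι] [CommRing R] [StarRing R] {ζ : ι → R} (hζ : ∀ i, star (ζ i) * ζ i = 1)
    (d : ι → R) : (diagonal ζ)ᴴ * diagonal d * diagonal ζ = diagonal d := by
  rw [diagonal_conjTranspose, diagonal_mul_diagonal, diagonal_mul_diagonal]
  congr 1
  funext i
  rw [mul_right_comm, Pi.star_apply, hζ i, one_mul]

variable (ω : Fin n → Fin m → ℂ) (ζ : Fin n → ℂ)

lemma incM_star_mul : incM (fun i k => star (ζ i) * ω i k) = (diagonal ζ)ᴴ * incM ω := by
  ext i k
  simp [incM, diagonal_conjTranspose]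

lemma adjM_star_mul :
    adjM (fun i k => star (ζ i) * ω i k) = (diagonal ζ)ᴴ * adjM ω * diagonal ζ := by
  ext i j
  by_cases hij : i = j
  · simp [adjM, diagonal_conjTranspose, hij]
  · simp only [adjM, diagonal_conjTranspose, mul_diagonal, diagonal_mul, of_apply,
      Pi.star_apply, if_neg hij, Finset.mul_sum, Finset.sum_mul, mul_neg, neg_mul, map_mul,
      Complex.star_def, Complex.conj_conj]
    congr 1
    refine Finset.sum_congr rfl fun k _ => ?_
    ring

variable {ζ}

lemma kirLap_star_mul (hζ : ∀ i, star (ζ i) * ζ i = 1) :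
    kirLap (fun i k => star (ζ i) * ω i k) = (diagonal ζ)ᴴ * kirLap ω * diagonal ζ := by
  have hc : ∀ i, star (ζ i) ≠ 0 := fun i => left_ne_zero_of_mul_eq_one (hζ i)
  rw [kirLap, kirLap, degM_mul_left ω hc, adjM_star_mul, Matrix.mul_sub, Matrix.sub_mul, degM,
    conjTranspose_diagonal_mul_diagonal_mul_diagonal hζ]

lemma normLap_star_mul (hζ : ∀ i, star (ζ i) * ζ i = 1) :
    normLap (fun i k => star (ζ i) * ω i k) = (diagonal ζ)ᴴ * normLap ω * diagonal ζ := by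
  have hc : ∀ i, star (ζ i) ≠ 0 := fun i => left_ne_zero_of_mul_eq_one (hζ i)
  have hcomm : Commute (degM ω)⁻¹ (diagonal ζ)ᴴ := by
    rw [degM, inv_diagonal, diagonal_conjTranspose]
    exact commute_diagonal _ _
  rw [normLap, normLap, degM_mul_left ω hc, kirLap_star_mul ω hζ, ← Matrix.mul_assoc,
    ← Matrix.mul_assoc, hcomm.eq, Matrix.mul_assoc (diagonal ζ)ᴴ]

end Switching

theorem stmt9_general (n m : ℕ) (ω : Fin n → Fin m → ℂ)
    (ζ : Fin n → ℂ) (hζ : ∀ i, ‖ζ i‖ = 1) :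
    incM (fun i k => (ζ i)⁻¹ * ω i k) = (Matrix.diagonal ζ)ᴴ * incM ω ∧
    adjM (fun i k => (ζ i)⁻¹ * ω i k) =
      (Matrix.diagonal ζ)ᴴ * adjM ω * Matrix.diagonal ζ ∧
    kirLap (fun i k => (ζ i)⁻¹ * ω i k) =
      (Matrix.diagonal ζ)ᴴ * kirLap ω * Matrix.diagonal ζ ∧
    ((∀ i, 0 < deg ω i) →
      normLap (fun i k => (ζ i)⁻¹ * ω i k) =
        (Matrix.diagonal ζ)ᴴ * normLap ω * Matrix.diagonal ζ) := by
  have hunit : ∀ i, star (ζ i) * ζ i = 1 := fun i => by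
    rw [Complex.star_def, Complex.conj_mul', hζ i]
    norm_num
  have hswitch : (fun i k => (ζ i)⁻¹ * ω i k) = fun i k => star (ζ i) * ω i k := by
    funext i k
    rw [inv_eq_of_mul_eq_one_left (hunit i)]
  rw [hswitch]
  exact ⟨incM_star_mul ω ζ, adjM_star_mul ω ζ, kirLap_star_mul ω hunit,
    fun _ => normLap_star_mul ω hunit⟩

/-- Effect of vertex switching `ω^ζ(i,k) = ζ(i)⁻¹ ω(i,k)` on the matrices:
`B(G^ζ) = D(ζ)ᴴ B(G)`, `A(G^ζ) = D(ζ)ᴴ A(G) D(ζ)`, `K(G^ζ) = D(ζ)ᴴ K(G) D(ζ)` and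
(with all degrees positive) `L(G^ζ) = D(ζ)ᴴ L(G) D(ζ)`. -/
theorem stmt9 (n m : ℕ) (ω : Fin n → Fin m → ℂ)
    (hω : ∀ i k, ω i k = 0 ∨ ‖ω i k‖ = 1)
    (ζ : Fin n → ℂ) (hζ : ∀ i, ‖ζ i‖ = 1) :
    incM (fun i k => (ζ i)⁻¹ * ω i k) = (Matrix.diagonal ζ)ᴴ * incM ω ∧
    adjM (fun i k => (ζ i)⁻¹ * ω i k) =
      (Matrix.diagonal ζ)ᴴ * adjM ω * Matrix.diagonal ζ ∧
    kirLap (fun i k => (ζ i)⁻¹ * ω i k) =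
      (Matrix.diagonal ζ)ᴴ * kirLap ω * Matrix.diagonal ζ ∧
    ((∀ i, 0 < deg ω i) →
      normLap (fun i k => (ζ i)⁻¹ * ω i k) =
        (Matrix.diagonal ζ)ᴴ * normLap ω * Matrix.diagonal ζ) :=
  stmt9_general n m ω ζ hζ
end

section
/- Let ξ : Fin m → ℂ with ‖ξ(k)‖ = 1 for all k be an edge switching function, and let G^ξ be the complex unit hypergraph with incidence function ω^ξ(i, k) = ξ(k)⁻¹ · ω(i, k). Then B(G^ξ) = B(G) · diag(ξ(k)⁻¹), while the adjacency matrix, Kirchhoff Laplacian and (when all degrees are positive) normalized Laplacian are unchanged: A(G^ξ) = A(G), K(G^ξ) = K(G), L(G^ξ) = L(G). -/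
open Matrix

/-! Switching multiplies column `k` of the incidence matrix by the unit scalar `c k`. The degrees
only see the zero pattern of `ω`, and the adjacency entries are sums of `ω i k * conj (ω j k)`, in which
the factor `c k * conj (c k) = ‖c k‖ ^ 2 = 1` cancels. -/

section Switching

variable {n m : ℕ} (ω : Fin n → Fin m → ℂ) (c : Fin m → ℂ)

theorem incM_switch : incM (fun i k => c k * ω i k) = incM ω * diagonal c := by
  ext i k
  rw [mul_diagonal]
  exact mul_comm _ _

theorem deg_switch (hc : ∀ k, c k ≠ 0) : deg (fun i k => c k * ω i k) = deg ω := by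
  funext i
  simp only [deg, ne_eq, mul_eq_zero, hc, false_or]

theorem degM_switch (hc : ∀ k, c k ≠ 0) : degM (fun i k => c k * ω i k) = degM ω := by
  rw [degM, deg_switch ω c hc, degM]

theorem adjM_switch (hc : ∀ k, ‖c k‖ = 1) : adjM (fun i k => c k * ω i k) = adjM ω := by
  have hunit : ∀ k, c k * starRingEnd ℂ (c k) = 1 := fun k => by
    rw [Complex.mul_conj', hc k, Complex.ofReal_one, one_pow]
  ext i j
  simp only [adjM, of_apply, map_mul]
  congr 2
  refine Finset.sum_congr rfl fun k _ => ?_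
  linear_combination ω i k * starRingEnd ℂ (ω j k) * hunit k

theorem kirLap_switch (hc : ∀ k, ‖c k‖ = 1) : kirLap (fun i k => c k * ω i k) = kirLap ω := by
  have hc0 : ∀ k, c k ≠ 0 := fun k => norm_ne_zero_iff.mp (by rw [hc k]; exact one_ne_zero)
  rw [kirLap, degM_switch ω c hc0, adjM_switch ω c hc, kirLap]

theorem normLap_switch (hc : ∀ k, ‖c k‖ = 1) : normLap (fun i k => c k * ω i k) = normLap ω := by
  have hc0 : ∀ k, c k ≠ 0 := fun k => norm_ne_zero_iff.mp (by rw [hc k]; exact one_ne_zero)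
  rw [normLap, degM_switch ω c hc0, kirLap_switch ω c hc, normLap]

end Switching

theorem stmt10_general (n m : ℕ) (ω : Fin n → Fin m → ℂ)
    (ξ : Fin m → ℂ) (hξ : ∀ k, ‖ξ k‖ = 1) :
    incM (fun i k => (ξ k)⁻¹ * ω i k) =
      incM ω * Matrix.diagonal (fun k => (ξ k)⁻¹) ∧
    adjM (fun i k => (ξ k)⁻¹ * ω i k) = adjM ω ∧
    kirLap (fun i k => (ξ k)⁻¹ * ω i k) = kirLap ω ∧
    ((∀ i, 0 < deg ω i) → normLap (fun i k => (ξ k)⁻¹ * ω i k) = normLap ω) := by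
  have hξinv : ∀ k, ‖(ξ k)⁻¹‖ = 1 := fun k => by rw [norm_inv, hξ k, inv_one]
  exact ⟨incM_switch ω _, adjM_switch ω _ hξinv, kirLap_switch ω _ hξinv,
    fun _ => normLap_switch ω _ hξinv⟩

/-- Effect of edge switching `ω^ξ(i,k) = ξ(k)⁻¹ ω(i,k)`:
`B(G^ξ) = B(G) · diag(ξ(k)⁻¹)` while `A`, `K` and (when all degrees are positive) `L`
are unchanged. -/
theorem stmt10 (n m : ℕ) (ω : Fin n → Fin m → ℂ)
    (hω : ∀ i k, ω i k = 0 ∨ ‖ω i k‖ = 1)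
    (ξ : Fin m → ℂ) (hξ : ∀ k, ‖ξ k‖ = 1) :
    incM (fun i k => (ξ k)⁻¹ * ω i k) =
      incM ω * Matrix.diagonal (fun k => (ξ k)⁻¹) ∧
    adjM (fun i k => (ξ k)⁻¹ * ω i k) = adjM ω ∧
    kirLap (fun i k => (ξ k)⁻¹ * ω i k) = kirLap ω ∧
    ((∀ i, 0 < deg ω i) → normLap (fun i k => (ξ k)⁻¹ * ω i k) = normLap ω) :=
  stmt10_general n m ω ξ hξ
end
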